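/- Let A be a G-graded, positively Z-filtered algebra with F₀A = K, together with a (G × Z)-graded algebra isomorphism φ_A : S(V) → G(A) from the ε-symmetric algebra of a G-graded vector space V to the associated graded algebra of A. Then F₁A is closed under the ε-commutator [a,b] = ab − ε(|a|,|b|)ba, making F₁A a color Lie algebra, and K = F₀A is a central graded ideal of F₁A, giving a central extension 0 → K → F₁A → L → 0 where L is the induced color Lie algebra structure on S₁(V) ≅ F₁A/F₀A. -/

import Mathlib

/-!
The symbol of `a * b - ε(g, h) • (b * a)` for homogeneous `a, b ∈ F₁A` is the `ε`-commutator
in `G₂(A) ≅ S₂(V)`, which vanishes; so the commutator drops to `F₁A`. Since `F₁A` is spanned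
by homogeneous elements, the commutator extends bilinearly to a bracket on `F₁A`, and its
antisymmetry and Jacobi identity are identities valid in any associative algebra for a
bicharacter `ε`. Finally `F₀A = K · 1`, the unit has trivial degree because the grading is
multiplicative, and scalars `ε`-commute with everything because `ε(1, h) = 1`.
-/

open TensorAlgebra

/-- An antisymmetric bicharacter `ε : G × G → K` on an abelian group `G`. -/
structure ColorStructure (G K : Type*) [CommGroup G] [Field K] where
  ε : G → G → K
  antisym : ∀ g h, ε g h * ε h g = 1
  mul_right : ∀ g h k, ε g (h * k) = ε g h * ε g k
  mul_left : ∀ g h k, ε (g * h) k = ε g k * ε h k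

/-- A `G`-graded `ε`-Lie algebra (color Lie algebra) structure on a `K`-vector space `V`. -/
structure ColorLieAlgebra {G K : Type*} [CommGroup G] [DecidableEq G] [Field K]
    (χ : ColorStructure G K) (V : Type*) [AddCommGroup V] [Module K V] where
  grading : G → Submodule K V
  decomp : DirectSum.IsInternal grading
  bracket : V →ₗ[K] V →ₗ[K] V
  bracket_grade : ∀ g h : G, ∀ a ∈ grading g, ∀ b ∈ grading h,
    bracket a b ∈ grading (g * h)
  bracket_antisym : ∀ g h : G, ∀ a ∈ grading g, ∀ b ∈ grading h,
    bracket a b = -(χ.ε g h • bracket b a)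
  jacobi : ∀ g h k : G, ∀ a ∈ grading g, ∀ b ∈ grading h, ∀ c ∈ grading k,
    χ.ε k g • bracket a (bracket b c) + χ.ε g h • bracket b (bracket c a)
      + χ.ε h k • bracket c (bracket a b) = 0

/-- A scalar graded 2-cocycle of degree zero on a color Lie algebra,
with values in `K` regarded as a trivial graded `L`-module. -/
structure ColorCocycle {G K : Type*} [CommGroup G] [DecidableEq G] [Field K]
    {χ : ColorStructure G K} {V : Type*} [AddCommGroup V] [Module K V]
    (L : ColorLieAlgebra χ V) where
  ω : V →ₗ[K] V →ₗ[K] K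
  antisym : ∀ g h : G, ∀ a ∈ L.grading g, ∀ b ∈ L.grading h,
    ω a b = -(χ.ε g h * ω b a)
  cocycle : ∀ g h k : G, ∀ a ∈ L.grading g, ∀ b ∈ L.grading h, ∀ c ∈ L.grading k,
    χ.ε k g * ω a (L.bracket b c) + χ.ε g h * ω b (L.bracket c a)
      + χ.ε h k * ω c (L.bracket a b) = 0
  degree_zero : ∀ g h : G, g * h ≠ 1 → ∀ a ∈ L.grading g, ∀ b ∈ L.grading h, ω a b = 0

variable {G K V : Type*} [CommGroup G] [DecidableEq G] [Field K] [AddCommGroup V] [Module K V]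
  {χ : ColorStructure G K}

/-- The defining relations of the generalized enveloping algebra `U_ω(L)`. -/
inductive URel (L : ColorLieAlgebra χ V) (c : ColorCocycle L) :
    TensorAlgebra K V → TensorAlgebra K V → Prop
  | rel {g h : G} {a b : V} (ha : a ∈ L.grading g) (hb : b ∈ L.grading h) :
      URel L c (ι K a * ι K b)
        (χ.ε g h • (ι K b * ι K a) + ι K (L.bracket a b)
          + algebraMap K (TensorAlgebra K V) (c.ω a b))

/-- The generalized enveloping algebra `U_ω(L)`: the quotient of the tensor algebra `T(L)`
by the two-sided ideal generated by the elements
`v₁ ⊗ v₂ - ε(|v₁|,|v₂|) v₂ ⊗ v₁ - [v₁,v₂] - ω(v₁,v₂)` for homogeneous `v₁, v₂`. -/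
def Uenv (L : ColorLieAlgebra χ V) (c : ColorCocycle L) : Type _ :=
  RingQuot (URel L c)

noncomputable instance (L : ColorLieAlgebra χ V) (c : ColorCocycle L) : Ring (Uenv L c) :=
  inferInstanceAs (Ring (RingQuot (URel L c)))

noncomputable instance (L : ColorLieAlgebra χ V) (c : ColorCocycle L) :
    Algebra K (Uenv L c) :=
  inferInstanceAs (Algebra K (RingQuot (URel L c)))

/-- The canonical map `i_ω : L → U_ω(L)`. -/
noncomputable def Uι (L : ColorLieAlgebra χ V) (c : ColorCocycle L) : V →ₗ[K] Uenv L c :=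
  (RingQuot.mkAlgHom K (URel L c)).toLinearMap ∘ₗ ι K

/-- The canonical positive filtration on `U_ω(L)`: `Ufil L c n` is the span of products of
at most `n` images of elements of `L` (the image of `T_n(L)`). -/
noncomputable def Ufil (L : ColorLieAlgebra χ V) (c : ColorCocycle L) (n : ℕ) :
    Submodule K (Uenv L c) :=
  Submodule.span K {u | ∃ l : List V, l.length ≤ n ∧ u = (l.map (Uι L c)).prod}

/-- `Ulow L c n` is `Ufil L c (n-1)`, with the convention `Ufil L c (-1) = ⊥`. -/
noncomputable def Ulow (L : ColorLieAlgebra χ V) (c : ColorCocycle L) :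
    ℕ → Submodule K (Uenv L c)
  | 0 => ⊥
  | n + 1 => Ufil L c n

/-- The `G`-grading of `U_ω(L)`: the `g`-component is spanned by products of images of
homogeneous elements whose degrees multiply to `g`. -/
noncomputable def Ugrading (L : ColorLieAlgebra χ V) (c : ColorCocycle L) (g : G) :
    Submodule K (Uenv L c) :=
  Submodule.span K {u | ∃ l : List (G × V), (∀ p ∈ l, p.2 ∈ L.grading p.1) ∧
    (l.map Prod.fst).prod = g ∧ u = (l.map fun p => Uι L c p.2).prod}

/-- `lowerFil F n = F (n-1)`, with the convention `F (-1) = ⊥`. -/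
def lowerFil {A : Type*} [Ring A] [Algebra K A]
    (F : ℕ → Submodule K A) : ℕ → Submodule K A
  | 0 => ⊥
  | n + 1 => F n

namespace ColorStructure

omit [DecidableEq G]

variable (χ : ColorStructure G K)

lemma ε_ne_zero (g h : G) : χ.ε g h ≠ 0 :=
  left_ne_zero_of_mul_eq_one (χ.antisym g h)

lemma ε_swap (g h : G) : χ.ε h g = (χ.ε g h)⁻¹ :=
  eq_inv_of_mul_eq_one_left (χ.antisym h g)

@[simp]
lemma ε_one_left (h : G) : χ.ε 1 h = 1 := by
  have h1 := χ.mul_left 1 1 h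
  rw [one_mul] at h1
  exact (mul_eq_left₀ (χ.ε_ne_zero 1 h)).mp h1.symm

variable {A : Type*} [Ring A] [Algebra K A]

def commutator (g h : G) : A →ₗ[K] A →ₗ[K] A :=
  LinearMap.mul K A - χ.ε g h • (LinearMap.mul K A).flip

@[simp]
lemma commutator_apply (g h : G) (a b : A) :
    χ.commutator g h a b = a * b - χ.ε g h • (b * a) := rfl

lemma commutator_antisymm (g h : G) (a b : A) :
    χ.commutator g h a b = -(χ.ε g h • χ.commutator h g b a) := by
  simp only [commutator_apply, smul_sub, smul_smul, χ.antisym, one_smul, neg_sub]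

lemma commutator_jacobi (g h k : G) (a b c : A) :
    χ.ε k g • χ.commutator g (h * k) a (χ.commutator h k b c)
      + χ.ε g h • χ.commutator h (k * g) b (χ.commutator k g c a)
      + χ.ε h k • χ.commutator k (g * h) c (χ.commutator g h a b) = 0 := by
  simp only [commutator_apply, χ.mul_right, χ.ε_swap g h, χ.ε_swap h k, χ.ε_swap k g,
    mul_sub, sub_mul, smul_sub, mul_smul_comm, smul_mul_assoc, smul_smul, mul_assoc]
  have := χ.ε_ne_zero g h
  have := χ.ε_ne_zero h k
  have := χ.ε_ne_zero k g
  match_scalars <;> field_simp <;> ring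

lemma commutator_algebraMap_left (h : G) (μ : K) (b : A) :
    χ.commutator 1 h (algebraMap K A μ) b = 0 := by
  simp [Algebra.commutes]

end ColorStructure

namespace DirectSum

section GradedMul

variable {ι σ A : Type*} [DecidableEq ι] [Monoid ι] [IsLeftCancelMul ι] [Semiring A]
  [SetLike σ A] [AddSubmonoidClass σ A] {𝒜 : ι → σ} [Decomposition 𝒜]

theorem coe_decompose_mul_of_left_mem_of_mul_mem
    (hmul : ∀ i j, ∀ a ∈ 𝒜 i, ∀ b ∈ 𝒜 j, a * b ∈ 𝒜 (i * j)) {i : ι} {x : A} (hx : x ∈ 𝒜 i)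
    (y : A) : (decompose 𝒜 (x * y) i : A) = x * decompose 𝒜 y 1 := by
  classical
  conv_lhs => rw [← sum_support_decompose 𝒜 y, Finset.mul_sum, decompose_sum]
  rw [DFinsupp.finsetSum_apply, AddSubmonoidClass.coe_finsetSum]
  have hterm : ∀ j, (decompose 𝒜 (x * decompose 𝒜 y j) i : A)
      = if j = 1 then x * decompose 𝒜 y j else 0 := by
    intro j
    split_ifs with hj
    · subst hj
      exact decompose_of_mem_same 𝒜 (by simpa using hmul i 1 x hx _ (SetLike.coe_mem _))
    · exact decompose_of_mem_ne 𝒜 (hmul i j x hx _ (SetLike.coe_mem _))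
        (by simpa [mul_eq_left] using hj)
  simp only [hterm, Finset.sum_ite_eq', DFinsupp.mem_support_toFun, ne_eq, ite_not]
  split_ifs with h0 <;> simp [h0]

theorem one_mem_of_mul_mem (hmul : ∀ i j, ∀ a ∈ 𝒜 i, ∀ b ∈ 𝒜 j, a * b ∈ 𝒜 (i * j)) :
    (1 : A) ∈ 𝒜 1 := by
  classical
  have hunit : (1 : A) = decompose 𝒜 1 1 := calc
    (1 : A) = ∑ j ∈ (decompose 𝒜 (1 : A)).support, (decompose 𝒜 (1 : A) j : A) :=
      (sum_support_decompose 𝒜 1).symm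
    _ = ∑ j ∈ (decompose 𝒜 (1 : A)).support, (decompose 𝒜 (1 : A) j : A) * decompose 𝒜 1 1 := by
      refine Finset.sum_congr rfl fun j _ => ?_
      rw [← coe_decompose_mul_of_left_mem_of_mul_mem hmul (SetLike.coe_mem _), mul_one,
        decompose_coe, of_eq_same]
    _ = decompose 𝒜 1 1 := by rw [← Finset.sum_mul, sum_support_decompose, one_mul]
  rw [hunit]
  exact SetLike.coe_mem _

end GradedMul

theorem IsInternal.comap_subtype {ι R M : Type*} [DecidableEq ι] [Ring R] [AddCommGroup M]
    [Module R M] {𝒜 : ι → Submodule R M} (h : IsInternal 𝒜) {p : Submodule R M}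
    (hp : p = ⨆ i, p ⊓ 𝒜 i) : IsInternal fun i => (𝒜 i).comap p.subtype := by
  have hmap : ∀ i, ((𝒜 i).comap p.subtype).map p.subtype = p ⊓ 𝒜 i :=
    fun i => Submodule.map_comap_subtype p (𝒜 i)
  rw [isInternal_submodule_iff_iSupIndep_and_iSup_eq_top]
  constructor
  · rw [← iSupIndep_map_orderIso_iff p.mapIic]
    refine .of_coe_Iic_comp (h.submodule_iSupIndep.mono fun i => ?_)
    change ((𝒜 i).comap p.subtype).map p.subtype ≤ 𝒜 i
    exact (hmap i).trans_le inf_le_right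
  · apply Submodule.map_injective_of_injective p.injective_subtype
    rw [Submodule.map_iSup, Submodule.map_top, Submodule.range_subtype]
    simp_rw [hmap]
    exact hp.symm

variable {ι R M N : Type*} [DecidableEq ι] [CommSemiring R] [AddCommMonoid M] [Module R M]
  [AddCommMonoid N] [Module R N] {𝒢 : ι → Submodule R M}

noncomputable def IsInternal.lift₂ (h : IsInternal 𝒢) (B : ∀ i j, 𝒢 i →ₗ[R] 𝒢 j →ₗ[R] N) :
    M →ₗ[R] M →ₗ[R] N :=
  let d := (LinearEquiv.ofBijective (coeLinearMap 𝒢) h).symm.toLinearMap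
  (toModule R ι _ fun i => (toModule R ι _ fun j => (B i j).flip).flip).compl₁₂ d d

theorem IsInternal.lift₂_apply_of_mem (h : IsInternal 𝒢) (B : ∀ i j, 𝒢 i →ₗ[R] 𝒢 j →ₗ[R] N)
    {i j : ι} {a b : M} (ha : a ∈ 𝒢 i) (hb : b ∈ 𝒢 j) :
    h.lift₂ B a b = B i j ⟨a, ha⟩ ⟨b, hb⟩ := by
  have hd : ∀ {k : ι} {x : M} (hx : x ∈ 𝒢 k),
      (LinearEquiv.ofBijective (coeLinearMap 𝒢) h).symm x = lof R ι (fun k => 𝒢 k) k ⟨x, hx⟩ := by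
    intro k x hx
    rw [LinearEquiv.symm_apply_eq]
    exact (coeLinearMap_of 𝒢 k ⟨x, hx⟩).symm
  simp [lift₂, hd ha, hd hb]

end DirectSum

namespace ColorStructure

variable (χ) {A : Type*} [Ring A] [Algebra K A] {AG : G → Submodule K A}
  (hAdec : DirectSum.IsInternal AG) {P : Submodule K A} (hP : P = ⨆ g, P ⊓ AG g)
  (hc : ∀ g h : G, ∀ a ∈ P ⊓ AG g, ∀ b ∈ P ⊓ AG h, χ.commutator g h a b ∈ P)

-- `ε(g, h)` depends on the degrees, so the commutator is only defined on pairs of homogeneous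
-- elements and has to be extended bilinearly.
noncomputable def restrictedCommutator : P →ₗ[K] P →ₗ[K] P :=
  (hAdec.comap_subtype hP).lift₂ fun g h =>
    LinearMap.codRestrict₂
      ((χ.commutator g h).compl₁₂ (P.subtype ∘ₗ ((AG g).comap P.subtype).subtype)
        (P.subtype ∘ₗ ((AG h).comap P.subtype).subtype))
      P.subtype P.injective_subtype
      (fun x y => by
        rw [Submodule.range_subtype]
        exact hc g h _ ⟨x.1.2, x.2⟩ _ ⟨y.1.2, y.2⟩)

lemma coe_restrictedCommutator_of_mem {g h : G} {a b : P} (ha : (a : A) ∈ AG g)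
    (hb : (b : A) ∈ AG h) :
    (χ.restrictedCommutator hAdec hP hc a b : A) = χ.commutator g h (a : A) (b : A) := by
  rw [restrictedCommutator, (hAdec.comap_subtype hP).lift₂_apply_of_mem _
    (show a ∈ (AG g).comap P.subtype from ha) (show b ∈ (AG h).comap P.subtype from hb)]
  exact LinearMap.codRestrict₂_apply _ P.subtype P.injective_subtype _ _ _

lemma restrictedCommutator_mem (hmul : ∀ g h : G, ∀ a ∈ AG g, ∀ b ∈ AG h, a * b ∈ AG (g * h))
    {g h : G} {a b : P} (ha : (a : A) ∈ AG g) (hb : (b : A) ∈ AG h) :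
    (χ.restrictedCommutator hAdec hP hc a b : A) ∈ AG (g * h) := by
  rw [χ.coe_restrictedCommutator_of_mem hAdec hP hc ha hb, commutator_apply]
  exact sub_mem (hmul g h _ ha _ hb) (Submodule.smul_mem _ _ (mul_comm g h ▸ hmul h g _ hb _ ha))

lemma restrictedCommutator_eq_zero_of_eq_algebraMap
    (hmul : ∀ g h : G, ∀ a ∈ AG g, ∀ b ∈ AG h, a * b ∈ AG (g * h)) {a : P} {μ : K}
    (ha : (a : A) = algebraMap K A μ) : χ.restrictedCommutator hAdec hP hc a = 0 := by
  let := hAdec.chooseDecomposition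
  have ha₁ : (a : A) ∈ AG 1 := by
    rw [ha, Algebra.algebraMap_eq_smul_one]
    exact Submodule.smul_mem _ _ (DirectSum.one_mem_of_mul_mem hmul)
  refine LinearMap.ker_eq_top.mp (top_le_iff.mp ?_)
  rw [← (hAdec.comap_subtype hP).submodule_iSup_eq_top]
  refine iSup_le fun h b hb => LinearMap.mem_ker.mpr (Subtype.ext ?_)
  rw [χ.coe_restrictedCommutator_of_mem hAdec hP hc ha₁ hb, ha, commutator_algebraMap_left,
    ZeroMemClass.coe_zero]

noncomputable def commutatorColorLieAlgebra
    (hmul : ∀ g h : G, ∀ a ∈ AG g, ∀ b ∈ AG h, a * b ∈ AG (g * h)) : ColorLieAlgebra χ P where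
  grading g := (AG g).comap P.subtype
  decomp := hAdec.comap_subtype hP
  bracket := χ.restrictedCommutator hAdec hP hc
  bracket_grade _ _ _ ha _ hb := χ.restrictedCommutator_mem hAdec hP hc hmul ha hb
  bracket_antisym g h a ha b hb := by
    ext
    rw [Submodule.coe_neg, Submodule.coe_smul,
      χ.coe_restrictedCommutator_of_mem hAdec hP hc ha hb,
      χ.coe_restrictedCommutator_of_mem hAdec hP hc hb ha, commutator_antisymm]
  jacobi g h k a ha b hb c hc' := by
    ext
    have hbc := χ.restrictedCommutator_mem hAdec hP hc hmul hb hc'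
    have hca := χ.restrictedCommutator_mem hAdec hP hc hmul hc' ha
    have hab := χ.restrictedCommutator_mem hAdec hP hc hmul ha hb
    simp only [Submodule.coe_add, Submodule.coe_smul, ZeroMemClass.coe_zero,
      χ.coe_restrictedCommutator_of_mem hAdec hP hc ha hbc,
      χ.coe_restrictedCommutator_of_mem hAdec hP hc hb hca,
      χ.coe_restrictedCommutator_of_mem hAdec hP hc hc' hab,
      χ.coe_restrictedCommutator_of_mem hAdec hP hc ha hb,
      χ.coe_restrictedCommutator_of_mem hAdec hP hc hb hc',
      χ.coe_restrictedCommutator_of_mem hAdec hP hc hc' ha]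
    exact χ.commutator_jacobi g h k (a : A) b c

end ColorStructure

theorem F1_is_color_lie_central_extension_general
    {A : Type*} [Ring A] [Algebra K A]
    (F : ℕ → Submodule K A) (AG : G → Submodule K A)
    (hAdec : DirectSum.IsInternal AG)
    (hF0 : F 0 = Submodule.span K {(1 : A)})
    (hgradedfil : ∀ n, F n = ⨆ g, F n ⊓ AG g)
    (hgrmul : ∀ g h : G, ∀ a ∈ AG g, ∀ b ∈ AG h, a * b ∈ AG (g * h))
    -- `ε`-commutativity of the associated graded algebra `G(A) ≅ S(V)`
    (hcomm : ∀ (m n : ℕ) (g h : G), ∀ a ∈ F m ⊓ AG g, ∀ b ∈ F n ⊓ AG h,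
      a * b - χ.ε g h • (b * a) ∈ lowerFil F (m + n)) :
    -- `F₁A` is closed under the `ε`-commutator of homogeneous elements
    (∀ (g h : G), ∀ a ∈ F 1 ⊓ AG g, ∀ b ∈ F 1 ⊓ AG h,
      a * b - χ.ε g h • (b * a) ∈ F 1) ∧
    -- `F₁A` is a color Lie algebra under the `ε`-commutator, with `F₀A = K` central,
    -- so that `0 → K → F₁A → L → 0` is a central extension
    (∃ E : ColorLieAlgebra χ ↥(F 1),
      (∀ g : G, E.grading g = Submodule.comap (F 1).subtype (AG g)) ∧
      (∀ (g h : G) (a b : ↥(F 1)), (a : A) ∈ AG g → (b : A) ∈ AG h →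
        ((E.bracket a b : ↥(F 1)) : A) = a * b - χ.ε g h • ((b : A) * a)) ∧
      (∀ a b : ↥(F 1), (a : A) ∈ F 0 → E.bracket a b = 0)) := by
  have hc : ∀ (g h : G), ∀ a ∈ F 1 ⊓ AG g, ∀ b ∈ F 1 ⊓ AG h,
      a * b - χ.ε g h • (b * a) ∈ F 1 :=
    fun g h a ha b hb => hcomm 1 1 g h a ha b hb
  refine ⟨hc, χ.commutatorColorLieAlgebra hAdec (hgradedfil 1) hc hgrmul, fun g => rfl,
    fun g h a b ha hb => χ.coe_restrictedCommutator_of_mem hAdec (hgradedfil 1) hc ha hb,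
    fun a b ha => ?_⟩
  obtain ⟨μ, hμ⟩ := Submodule.mem_span_singleton.mp (hF0 ▸ ha)
  have ha_scalar : (a : A) = algebraMap K A μ := by rw [← hμ, Algebra.algebraMap_eq_smul_one]
  exact LinearMap.congr_fun
    (χ.restrictedCommutator_eq_zero_of_eq_algebraMap hAdec (hgradedfil 1) hc hgrmul ha_scalar) b

/-- let `A` be a `G`-graded positively `ℤ`-filtered algebra with `F₀A = K`
whose associated graded algebra is (`G×ℤ`-graded isomorphic to) an `ε`-symmetric algebra,
in particular `ε`-commutative. Then `F₁A` is closed under the `ε`-commutator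
`[a,b] = ab - ε(|a|,|b|) ba` and becomes a color Lie algebra, in which `K = F₀A` is
central, giving a central extension `0 → K → F₁A → L → 0`. -/
theorem F1_is_color_lie_central_extension [CharZero K]
    {A : Type*} [Ring A] [Algebra K A]
    (F : ℕ → Submodule K A) (AG : G → Submodule K A)
    (hAdec : DirectSum.IsInternal AG)
    (hmono : Monotone F) (hexh : ⨆ n, F n = ⊤)
    (hF0 : F 0 = Submodule.span K {(1 : A)})
    (hFmul : ∀ m n : ℕ, ∀ a ∈ F m, ∀ b ∈ F n, a * b ∈ F (m + n))
    (hgradedfil : ∀ n, F n = ⨆ g, F n ⊓ AG g)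
    (hgrmul : ∀ g h : G, ∀ a ∈ AG g, ∀ b ∈ AG h, a * b ∈ AG (g * h))
    -- `ε`-commutativity of the associated graded algebra `G(A) ≅ S(V)`
    (hcomm : ∀ (m n : ℕ) (g h : G), ∀ a ∈ F m ⊓ AG g, ∀ b ∈ F n ⊓ AG h,
      a * b - χ.ε g h • (b * a) ∈ lowerFil F (m + n)) :
    -- `F₁A` is closed under the `ε`-commutator of homogeneous elements
    (∀ (g h : G), ∀ a ∈ F 1 ⊓ AG g, ∀ b ∈ F 1 ⊓ AG h,
      a * b - χ.ε g h • (b * a) ∈ F 1) ∧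
    -- `F₁A` is a color Lie algebra under the `ε`-commutator, with `F₀A = K` central,
    -- so that `0 → K → F₁A → L → 0` is a central extension
    (∃ E : ColorLieAlgebra χ ↥(F 1),
      (∀ g : G, E.grading g = Submodule.comap (F 1).subtype (AG g)) ∧
      (∀ (g h : G) (a b : ↥(F 1)), (a : A) ∈ AG g → (b : A) ∈ AG h →
        ((E.bracket a b : ↥(F 1)) : A) = a * b - χ.ε g h • ((b : A) * a)) ∧
      (∀ a b : ↥(F 1), (a : A) ∈ F 0 → E.bracket a b = 0)) :=
  F1_is_color_lie_central_extension_general F AG hAdec hF0 hgradedfil hgrmul hcomm
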